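/- Stanley's map ψ: [0,1]^{n-1} → [0,1]^{n-1} defined by ψ(x_1,...,x_{n-1}) = (y_1,...,y_{n-1}) with y_i = (x_1+...+x_i) - ⌊x_1+...+x_i⌋ is piecewise-linear, volume-preserving, and bijective outside a set of measure zero; the simplices ψ^{-1}(∇_w) for w ∈ S_{n-1} with des(w^{-1}) = k-1 triangulate the hypersimplex Δ̃_{k,n} = {x ∈ [0,1]^{n-1} : k-1 ≤ Σx_i ≤ k} into unit simplices, hence the normalized volume of Δ̃_{k,n} equals the Eulerian number A_{k,n-1}. -/

import Mathlib

/-!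
On a piece `T_w = cube ∩ ψ⁻¹(∇_w)` the integer parts of the partial sums `x₁ + ⋯ + x_i` are
forced: going from `i` to `i + 1` the partial sum crosses an integer exactly when
`ψ(x)_{i+1} < ψ(x)_i`, i.e. at a descent of `w⁻¹`. So on `T_w` the map `ψ` is the affine map
`x ↦ (partial sums of x) - (number of descents of w⁻¹ before i)`, whose linear part is
unitriangular, and `T_w` is exactly the preimage of `∇_w` under it. The `∇_w` are congruent under
coordinate permutations and tile the cube up to hyperplanes, so each has volume `1/(n-1)!`, and so
does each `T_w`; having total volume one, the `T_w` also tile the cube. Finally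
`⌊x₁ + ⋯ + x_{n-1}⌋ = des(w⁻¹)` on `T_w`, so the pieces meeting the interior of `Δ̃_{k,n}` are
exactly those with `des(w⁻¹) = k - 1`.
-/

open Finset MeasureTheory

section FloorStep

variable {R : Type*} [CommRing R] [LinearOrder R] [IsStrictOrderedRing R] [FloorRing R]

theorem Int.floor_add_eq_of_fract_ne {p t : R} (ht : t ∈ Set.Icc 0 1)
    (h : Int.fract (p + t) ≠ Int.fract p) :
    ⌊p + t⌋ = ⌊p⌋ + if Int.fract (p + t) < Int.fract p then 1 else 0 := by
  have key : ((⌊p + t⌋ - ⌊p⌋ : ℤ) : R) = t - (Int.fract (p + t) - Int.fract p) := by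
    push_cast [Int.fract]; abel
  have h₁ := Int.fract_nonneg p
  have h₂ := Int.fract_lt_one p
  have h₃ := Int.fract_nonneg (p + t)
  have h₄ := Int.fract_lt_one (p + t)
  split_ifs with hlt
  · have lo : (0 : R) < ((⌊p + t⌋ - ⌊p⌋ : ℤ) : R) := by rw [key]; linarith [ht.1]
    have hi : ((⌊p + t⌋ - ⌊p⌋ : ℤ) : R) < 2 := by rw [key]; linarith [ht.2]
    have lo' : 0 < ⌊p + t⌋ - ⌊p⌋ := by exact_mod_cast lo
    have hi' : ⌊p + t⌋ - ⌊p⌋ < 2 := by exact_mod_cast hi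
    omega
  · have hgt : Int.fract p < Int.fract (p + t) := lt_of_le_of_ne (not_lt.mp hlt) h.symm
    have lo : (-1 : R) < ((⌊p + t⌋ - ⌊p⌋ : ℤ) : R) := by rw [key]; linarith [ht.1]
    have hi : ((⌊p + t⌋ - ⌊p⌋ : ℤ) : R) < 1 := by rw [key]; linarith [ht.2]
    have lo' : -1 < ⌊p + t⌋ - ⌊p⌋ := by exact_mod_cast lo
    have hi' : ⌊p + t⌋ - ⌊p⌋ < 1 := by exact_mod_cast hi
    omega

theorem Int.fract_sub_eq_sub_add_ite {a b : R} (ha : a ∈ Set.Ico 0 1) (hb : b ∈ Set.Ico 0 1) :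
    Int.fract (b - a) = b - a + if b < a then 1 else 0 := by
  rw [Int.fract_eq_iff]
  split_ifs with h
  · exact ⟨by linarith [hb.1, ha.2], by linarith, -1, by push_cast; ring⟩
  · exact ⟨by linarith [not_lt.mp h], by linarith [hb.2, ha.1], 0, by push_cast; ring⟩

end FloorStep

theorem Int.floor_eq_natCast_sub_one_iff {R : Type*} [Ring R] [LinearOrder R] [FloorRing R]
    {a : R} {k : ℕ} (hk : 1 ≤ k) :
    ⌊a⌋ = ((k - 1 : ℕ) : ℤ) ↔ (k : R) - 1 ≤ a ∧ a < k := by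
  rw [Int.floor_eq_iff]
  push_cast [hk]
  rw [sub_add_cancel]

theorem MeasureTheory.Measure.addHaar_setOf_linearMap_eq {E : Type*} [NormedAddCommGroup E]
    [NormedSpace ℝ E] [MeasurableSpace E] [BorelSpace E] [FiniteDimensional ℝ E] (μ : Measure E)
    [μ.IsAddHaarMeasure] {l : E →ₗ[ℝ] ℝ} (hl : l ≠ 0) (c : ℝ) : μ {x | l x = c} = 0 := by
  obtain ⟨v, hv⟩ : ∃ v, l v ≠ 0 := by simpa [LinearMap.ext_iff] using hl
  have hset : {x | l x = c} = (fun x => x + -((c / l v) • v)) ⁻¹' (LinearMap.ker l : Set E) := by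
    ext x
    simp [← sub_eq_add_neg, sub_eq_zero, div_mul_cancel₀ _ hv]
  rw [hset, measure_preimage_add_right]
  exact Measure.addHaar_submodule μ _ fun h => hl (LinearMap.ker_eq_top.mp h)

theorem Fin.induction_val {m : ℕ} {P : Fin m → Prop} (zero : ∀ i : Fin m, (i : ℕ) = 0 → P i)
    (succ : ∀ i j : Fin m, (i : ℕ) + 1 = j → P i → P j) (i : Fin m) : P i := by
  cases m with
  | zero => exact i.elim0
  | succ m => exact Fin.induction (zero 0 rfl) (fun i hi => succ _ _ rfl hi) i

theorem Fin.val_eq_zero_or_exists_val_add_one_eq {m : ℕ} (j : Fin m) :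
    (j : ℕ) = 0 ∨ ∃ i : Fin m, (i : ℕ) + 1 = j :=
  (Nat.eq_zero_or_eq_succ_pred j).imp_right fun h => ⟨⟨j - 1, by omega⟩, by simp only; omega⟩

namespace StanleyHypersimplex

variable {m : ℕ}

def partialSum (x : Fin m → ℝ) (i : Fin m) : ℝ :=
  ∑ j ∈ univ.filter (fun j : Fin m => j ≤ i), x j

theorem partialSum_of_val_eq_zero (x : Fin m → ℝ) {i : Fin m} (h : (i : ℕ) = 0) :
    partialSum x i = x i := by
  have : univ.filter (fun a : Fin m => a ≤ i) = {i} := by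
    refine Finset.ext fun a => ?_
    simp only [mem_filter, mem_univ, true_and, mem_singleton, Fin.ext_iff, Fin.le_def]
    omega
  rw [partialSum, this, sum_singleton]

theorem partialSum_succ (x : Fin m → ℝ) {i j : Fin m} (h : (i : ℕ) + 1 = j) :
    partialSum x j = partialSum x i + x j := by
  have : univ.filter (fun a : Fin m => a ≤ j) = insert j (univ.filter (fun a => a ≤ i)) := by
    refine Finset.ext fun a => ?_
    simp only [mem_filter, mem_univ, true_and, mem_insert, Fin.ext_iff, Fin.le_def]
    omega
  have hj : j ∉ univ.filter (fun a : Fin m => a ≤ i) := by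
    simp only [mem_filter, mem_univ, true_and, Fin.le_def]; omega
  rw [partialSum, partialSum, this, sum_insert hj, add_comm]

theorem partialSum_last (x : Fin m → ℝ) {i : Fin m} (h : (i : ℕ) + 1 = m) :
    partialSum x i = ∑ j, x j := by
  rw [partialSum, filter_true_of_mem]
  exact fun j _ => Fin.le_def.mpr (by omega)

def partialSumLinear (m : ℕ) : (Fin m → ℝ) →ₗ[ℝ] Fin m → ℝ :=
  Matrix.toLin' (Matrix.of fun i j => if j ≤ i then 1 else 0)

theorem partialSumLinear_apply (x : Fin m → ℝ) : partialSumLinear m x = partialSum x := by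
  ext i
  simp [partialSumLinear, Matrix.mulVec, dotProduct, partialSum, Finset.sum_filter]

theorem det_partialSumLinear : LinearMap.det (partialSumLinear m) = 1 := by
  rw [partialSumLinear, LinearMap.det_toLin', Matrix.det_of_isLowerTriangular]
  · simp
  · intro i j hij
    simp [not_le.mpr (OrderDual.toDual_lt_toDual.mp hij)]

theorem measurePreserving_partialSumLinear :
    MeasurePreserving (partialSumLinear m) volume volume := by
  refine ⟨(partialSumLinear m).continuous_of_finiteDimensional.measurable, ?_⟩
  rw [Real.map_linearMap_volume_pi_eq_smul_volume_pi (by simp [det_partialSumLinear]),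
    det_partialSumLinear]
  simp

theorem injective_partialSumLinear : Function.Injective (partialSumLinear m) :=
  ((Module.End.isUnit_iff _).mp
    ((LinearMap.isUnit_iff_isUnit_det _).mpr (by simp [det_partialSumLinear]))).injective

def IsDescent (σ : Equiv.Perm (Fin m)) (i : Fin m) : Prop :=
  ∃ h : (i : ℕ) + 1 < m, σ ⟨(i : ℕ) + 1, h⟩ < σ i

instance (σ : Equiv.Perm (Fin m)) : DecidablePred (IsDescent σ) :=
  fun _ => inferInstanceAs (Decidable (∃ _, _))

theorem isDescent_iff {σ : Equiv.Perm (Fin m)} {i j : Fin m} (h : (i : ℕ) + 1 = j) :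
    IsDescent σ i ↔ σ j < σ i := by
  obtain ⟨j, hj⟩ := j
  subst h
  exact ⟨fun ⟨_, hd⟩ => hd, fun hd => ⟨hj, hd⟩⟩

noncomputable def numDescents (σ : Equiv.Perm (Fin m)) : ℕ := Nat.card {i // IsDescent σ i}

def descentsBefore (σ : Equiv.Perm (Fin m)) (i : Fin m) : ℕ := #{j ∈ Iio i | IsDescent σ j}

theorem descentsBefore_of_val_eq_zero (σ : Equiv.Perm (Fin m)) {i : Fin m} (h : (i : ℕ) = 0) :
    descentsBefore σ i = 0 := by
  simp [descentsBefore, Fin.lt_def, h]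

theorem descentsBefore_succ (σ : Equiv.Perm (Fin m)) {i j : Fin m} (h : (i : ℕ) + 1 = j) :
    descentsBefore σ j = descentsBefore σ i + if IsDescent σ i then 1 else 0 := by
  have : Iio j = insert i (Iio i) := by
    refine Finset.ext fun a => ?_
    simp only [mem_Iio, mem_insert, Fin.ext_iff, Fin.lt_def]
    omega
  rw [descentsBefore, descentsBefore, this, filter_insert]
  split_ifs <;> simp [card_insert_of_notMem]

theorem descentsBefore_last (σ : Equiv.Perm (Fin m)) {i : Fin m} (h : (i : ℕ) + 1 = m) :
    descentsBefore σ i = numDescents σ := by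
  rw [numDescents, Nat.card_eq_fintype_card, Fintype.card_subtype, descentsBefore]
  congr 1
  ext j
  simp only [mem_filter, mem_Iio, mem_univ, true_and, and_iff_right_iff_imp]
  exact fun ⟨hj, _⟩ => Fin.lt_def.mpr (by omega)

def cube (m : ℕ) : Set (Fin m → ℝ) := {x | ∀ i, 0 ≤ x i ∧ x i ≤ 1}

theorem cube_eq_pi : cube m = Set.univ.pi fun _ => Set.Icc 0 1 := by
  ext x; simp only [cube, Set.mem_univ_pi, Set.mem_Icc, Set.mem_ofPred_eq]

theorem volume_cube : volume (cube m) = 1 := by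
  rw [cube_eq_pi, volume_pi_pi]; simp

theorem volume_setOf_apply_eq (i : Fin m) (c : ℝ) : volume {y : Fin m → ℝ | y i = c} = 0 :=
  Measure.addHaar_setOf_linearMap_eq volume (l := LinearMap.proj (R := ℝ) (φ := fun _ => ℝ) i)
    (fun h => by simpa using LinearMap.congr_fun h (Pi.single i (1 : ℝ))) c

theorem volume_setOf_apply_eq_apply {i j : Fin m} (hij : i ≠ j) :
    volume {y : Fin m → ℝ | y i = y j} = 0 := by
  have hl : LinearMap.proj (R := ℝ) (φ := fun _ : Fin m => ℝ) i - LinearMap.proj j ≠ 0 :=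
    fun h => by simpa [hij.symm] using LinearMap.congr_fun h (Pi.single i (1 : ℝ))
  simpa [sub_eq_zero] using Measure.addHaar_setOf_linearMap_eq volume hl 0

theorem volume_setOf_sum_eq (hm : 0 < m) (c : ℝ) : volume {x : Fin m → ℝ | ∑ i, x i = c} = 0 := by
  have hl : ∑ i, LinearMap.proj (R := ℝ) (φ := fun _ : Fin m => ℝ) i ≠ 0 := fun h => by
    simpa using LinearMap.congr_fun h (Pi.single ⟨0, hm⟩ (1 : ℝ))
  simpa using Measure.addHaar_setOf_linearMap_eq volume hl c

def orderSimplex (w : Equiv.Perm (Fin m)) : Set (Fin m → ℝ) :=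
  {y | (∀ i, 0 < y (w i) ∧ y (w i) < 1) ∧ ∀ i j : Fin m, i < j → y (w i) < y (w j)}

variable {w : Equiv.Perm (Fin m)} {y : Fin m → ℝ}

theorem mem_Ioo_of_mem_orderSimplex (hy : y ∈ orderSimplex w) (a : Fin m) :
    y a ∈ Set.Ioo 0 1 := by
  simpa using hy.1 (w⁻¹ a)

theorem strictMono_comp_of_mem_orderSimplex (hy : y ∈ orderSimplex w) : StrictMono (y ∘ w) :=
  fun i j h => hy.2 i j h

theorem lt_iff_of_mem_orderSimplex (hy : y ∈ orderSimplex w) (a b : Fin m) :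
    y a < y b ↔ w⁻¹ a < w⁻¹ b := by
  simpa using (strictMono_comp_of_mem_orderSimplex hy).lt_iff_lt (a := w⁻¹ a) (b := w⁻¹ b)

theorem injective_of_mem_orderSimplex (hy : y ∈ orderSimplex w) : Function.Injective y := by
  simpa using (strictMono_comp_of_mem_orderSimplex hy).injective.comp w.symm.injective

theorem orderSimplex_subset_cube (w : Equiv.Perm (Fin m)) : orderSimplex w ⊆ cube m :=
  fun _ hy i => ⟨(mem_Ioo_of_mem_orderSimplex hy i).1.le, (mem_Ioo_of_mem_orderSimplex hy i).2.le⟩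

theorem measurableSet_orderSimplex (w : Equiv.Perm (Fin m)) : MeasurableSet (orderSimplex w) := by
  unfold orderSimplex; measurability

theorem pairwise_disjoint_orderSimplex :
    Pairwise (Function.onFun Disjoint (orderSimplex (m := m))) := by
  intro w w' hne
  refine Set.disjoint_left.mpr fun y hy hy' => hne ?_
  have := Tuple.unique_monotone (strictMono_comp_of_mem_orderSimplex hy).monotone
    (strictMono_comp_of_mem_orderSimplex hy').monotone
  exact Equiv.ext fun a => injective_of_mem_orderSimplex hy (congrFun this a)

theorem exists_mem_orderSimplex (h01 : ∀ i, y i ∈ Set.Ioo 0 1) (hinj : Function.Injective y) :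
    ∃ w : Equiv.Perm (Fin m), y ∈ orderSimplex w :=
  ⟨Tuple.sort y, fun _ => h01 _, fun _ _ h =>
    ((Tuple.monotone_sort y).strictMono_of_injective (hinj.comp (Tuple.sort y).injective)) h⟩

-- `orderSimplex w` is, definitionally, the preimage of `orderSimplex 1` under `y ↦ y ∘ w`.
theorem volume_orderSimplex (w : Equiv.Perm (Fin m)) :
    volume (orderSimplex w) = volume (orderSimplex (1 : Equiv.Perm (Fin m))) :=
  (volume_preserving_arrowCongr' w.symm (MeasurableEquiv.refl ℝ) (.id _)).measure_preimage
    (measurableSet_orderSimplex 1).nullMeasurableSet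

theorem volume_cube_diff_iUnion_orderSimplex :
    volume (cube m \ ⋃ w : Equiv.Perm (Fin m), orderSimplex w) = 0 := by
  refine measure_mono_null (t := (⋃ i, {y | y i = 0}) ∪ (⋃ i, {y | y i = 1}) ∪
    ⋃ i, ⋃ j, ⋃ (_ : i ≠ j), {y | y i = y j}) ?_ ?_
  · rintro y ⟨hy, hyU⟩
    by_contra hbad
    simp only [Set.mem_union, Set.mem_iUnion, Set.mem_ofPred_eq, not_or, not_exists] at hbad
    refine hyU (Set.mem_iUnion.mpr (exists_mem_orderSimplex (fun i => ?_) fun i j hij => ?_))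
    · exact ⟨(hy i).1.lt_of_ne' (hbad.1.1 i), (hy i).2.lt_of_ne (hbad.1.2 i)⟩
    · by_contra hne
      exact hbad.2 i j hne hij
  · simp only [measure_union_null_iff, measure_iUnion_null_iff]
    exact ⟨⟨fun i => volume_setOf_apply_eq i 0, fun i => volume_setOf_apply_eq i 1⟩,
      fun i j hij => volume_setOf_apply_eq_apply hij⟩

theorem iUnion_orderSimplex_ae_eq_cube :
    (⋃ w : Equiv.Perm (Fin m), orderSimplex w) =ᵐ[volume] cube m := by
  refine ae_eq_set.mpr ⟨?_, volume_cube_diff_iUnion_orderSimplex⟩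
  rw [Set.sdiff_eq_empty.mpr (Set.iUnion_subset orderSimplex_subset_cube), measure_empty]

theorem factorial_mul_volume_orderSimplex (w : Equiv.Perm (Fin m)) :
    (m.factorial : ENNReal) * volume (orderSimplex w) = 1 := by
  have h := measure_iUnion (μ := volume) (pairwise_disjoint_orderSimplex (m := m))
    measurableSet_orderSimplex
  rw [measure_congr iUnion_orderSimplex_ae_eq_cube, volume_cube, tsum_fintype] at h
  simp_rw [volume_orderSimplex] at h
  rw [volume_orderSimplex w, h, sum_const, card_univ, Fintype.card_perm, Fintype.card_fin,
    nsmul_eq_mul]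

noncomputable def stanleyMap (x : Fin m → ℝ) (i : Fin m) : ℝ := Int.fract (partialSum x i)

def piece (w : Equiv.Perm (Fin m)) : Set (Fin m → ℝ) := cube m ∩ stanleyMap ⁻¹' orderSimplex w

noncomputable def pieceMap (w : Equiv.Perm (Fin m)) (x : Fin m → ℝ) : Fin m → ℝ :=
  partialSum x - fun i => (descentsBefore w⁻¹ i : ℝ)

variable {x : Fin m → ℝ}

theorem floor_partialSum_of_mem_piece (hx : x ∈ piece w) (i : Fin m) :
    ⌊partialSum x i⌋ = descentsBefore w⁻¹ i := by
  obtain ⟨hcube, hy⟩ := hx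
  induction i using Fin.induction_val with
  | zero i hi =>
    rw [descentsBefore_of_val_eq_zero _ hi, partialSum_of_val_eq_zero _ hi, Nat.cast_zero,
      Int.floor_eq_zero_iff]
    refine ⟨(hcube i).1, (hcube i).2.lt_of_ne fun h1 => ?_⟩
    have := (mem_Ioo_of_mem_orderSimplex hy i).1
    simp [stanleyMap, partialSum_of_val_eq_zero _ hi, h1] at this
  | succ i j hij ih =>
    have hne : stanleyMap x j ≠ stanleyMap x i := fun h => by
      have := congrArg Fin.val (injective_of_mem_orderSimplex hy h)
      omega
    have hdesc : stanleyMap x j < stanleyMap x i ↔ IsDescent w⁻¹ i := by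
      rw [isDescent_iff hij]; exact lt_iff_of_mem_orderSimplex hy j i
    unfold stanleyMap at hne hdesc
    rw [partialSum_succ x hij] at hne hdesc ⊢
    rw [Int.floor_add_eq_of_fract_ne (hcube j) hne, ih, descentsBefore_succ _ hij]
    simp only [hdesc]
    split_ifs <;> simp

theorem mem_cube_of_pieceMap_mem (h : pieceMap w x ∈ orderSimplex w) : x ∈ cube m := by
  intro j
  suffices x j ∈ Set.Ico 0 1 from ⟨this.1, this.2.le⟩
  have hy a := Set.Ioo_subset_Ico_self (mem_Ioo_of_mem_orderSimplex h a)
  rcases Fin.val_eq_zero_or_exists_val_add_one_eq j with hj | ⟨i, hij⟩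
  · simpa [pieceMap, partialSum_of_val_eq_zero _ hj, descentsBefore_of_val_eq_zero _ hj] using hy j
  · have : x j = Int.fract (pieceMap w x j - pieceMap w x i) := by
      rw [Int.fract_sub_eq_sub_add_ite (hy i) (hy j)]
      simp only [lt_iff_of_mem_orderSimplex h, ← isDescent_iff hij]
      simp only [pieceMap, Pi.sub_apply, partialSum_succ x hij, descentsBefore_succ _ hij]
      split_ifs <;> push_cast <;> ring
    rw [this]
    exact ⟨Int.fract_nonneg _, Int.fract_lt_one _⟩

theorem stanleyMap_eq_pieceMap (hx : x ∈ piece w) : stanleyMap x = pieceMap w x := by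
  funext i
  simp [stanleyMap, pieceMap, Int.fract, floor_partialSum_of_mem_piece hx i]

theorem piece_eq_preimage (w : Equiv.Perm (Fin m)) : piece w = pieceMap w ⁻¹' orderSimplex w := by
  ext x
  refine ⟨fun hx => ?_, fun hx => ⟨mem_cube_of_pieceMap_mem hx, ?_⟩⟩
  · rw [Set.mem_preimage, ← stanleyMap_eq_pieceMap hx]
    exact hx.2
  · have : stanleyMap x = pieceMap w x := funext fun i => by
      have hi := mem_Ioo_of_mem_orderSimplex hx i
      rw [stanleyMap, Int.fract_eq_iff]
      exact ⟨hi.1.le, hi.2, descentsBefore w⁻¹ i, by simp [pieceMap]⟩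
    rwa [Set.mem_preimage, this]

theorem pieceMap_eq_comp (w : Equiv.Perm (Fin m)) :
    pieceMap w = (· - fun i => (descentsBefore w⁻¹ i : ℝ)) ∘ partialSumLinear m := by
  funext x
  simp [pieceMap, partialSumLinear_apply]

theorem measurePreserving_pieceMap (w : Equiv.Perm (Fin m)) :
    MeasurePreserving (pieceMap w) volume volume := by
  rw [pieceMap_eq_comp]
  exact (measurePreserving_sub_right volume _).comp measurePreserving_partialSumLinear

theorem injective_pieceMap (w : Equiv.Perm (Fin m)) : Function.Injective (pieceMap w) := by
  rw [pieceMap_eq_comp]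
  exact (sub_left_injective).comp injective_partialSumLinear

theorem measurableSet_piece (w : Equiv.Perm (Fin m)) : MeasurableSet (piece w) := by
  rw [piece_eq_preimage]
  exact (measurePreserving_pieceMap w).measurable (measurableSet_orderSimplex w)

theorem volume_piece (w : Equiv.Perm (Fin m)) : volume (piece w) = volume (orderSimplex w) := by
  rw [piece_eq_preimage]
  exact (measurePreserving_pieceMap w).measure_preimage
    (measurableSet_orderSimplex w).nullMeasurableSet

theorem factorial_mul_volume_piece (w : Equiv.Perm (Fin m)) :
    (m.factorial : ENNReal) * volume (piece w) = 1 := by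
  rw [volume_piece, factorial_mul_volume_orderSimplex]

theorem pairwise_disjoint_piece : Pairwise (Function.onFun Disjoint (piece (m := m))) :=
  fun _ _ h => ((pairwise_disjoint_orderSimplex h).preimage stanleyMap).mono
    Set.inter_subset_right Set.inter_subset_right

theorem iUnion_piece_ae_eq_cube : (⋃ w : Equiv.Perm (Fin m), piece w) =ᵐ[volume] cube m := by
  refine ae_eq_of_subset_of_measure_ge (Set.iUnion_subset fun w => Set.inter_subset_left)
    (le_of_eq ?_) (MeasurableSet.iUnion measurableSet_piece).nullMeasurableSet
    (by simp [volume_cube])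
  rw [← measure_congr iUnion_orderSimplex_ae_eq_cube,
    measure_iUnion pairwise_disjoint_orderSimplex measurableSet_orderSimplex,
    measure_iUnion pairwise_disjoint_piece measurableSet_piece]
  simp_rw [volume_piece]

theorem floor_sum_of_mem_piece (hm : 0 < m) (hx : x ∈ piece w) :
    ⌊∑ i, x i⌋ = numDescents w⁻¹ := by
  have hlast : ((⟨m - 1, by omega⟩ : Fin m) : ℕ) + 1 = m := by simp only; omega
  rw [← partialSum_last x hlast, floor_partialSum_of_mem_piece hx,
    descentsBefore_last _ hlast]

theorem measurable_stanleyMap : Measurable (stanleyMap : (Fin m → ℝ) → Fin m → ℝ) :=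
  measurable_pi_lambda _ fun _ => (Finset.measurable_sum _ fun j _ => measurable_pi_apply j).fract

theorem measurePreserving_stanleyMap :
    MeasurePreserving stanleyMap (volume.restrict (cube m)) (volume.restrict (cube m)) := by
  refine ⟨measurable_stanleyMap, ?_⟩
  have hpieces : volume.restrict (cube m) = Measure.sum fun w => volume.restrict (piece w) := by
    rw [← Measure.restrict_congr_set iUnion_piece_ae_eq_cube,
      Measure.restrict_iUnion pairwise_disjoint_piece measurableSet_piece]
  have hsimplices :
      volume.restrict (cube m) = Measure.sum fun w => volume.restrict (orderSimplex w) := by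
    rw [← Measure.restrict_congr_set iUnion_orderSimplex_ae_eq_cube,
      Measure.restrict_iUnion pairwise_disjoint_orderSimplex measurableSet_orderSimplex]
  conv_rhs => rw [hsimplices]
  rw [hpieces, Measure.map_sum measurable_stanleyMap.aemeasurable]
  congr 1
  funext w
  rw [Measure.map_congr ((ae_restrict_mem (measurableSet_piece w)).mono
    fun x hx => stanleyMap_eq_pieceMap hx), piece_eq_preimage]
  exact ((measurePreserving_pieceMap w).restrict_preimage (measurableSet_orderSimplex w)).map_eq

theorem injOn_stanleyMap : Set.InjOn stanleyMap (⋃ w : Equiv.Perm (Fin m), piece w) := by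
  intro x hx x' hx' h
  obtain ⟨w, hw⟩ := Set.mem_iUnion.mp hx
  obtain ⟨w', hw'⟩ := Set.mem_iUnion.mp hx'
  obtain rfl : w = w' := by
    by_contra hne
    exact Set.disjoint_left.mp (pairwise_disjoint_orderSimplex hne) hw.2 (h ▸ hw'.2)
  apply injective_pieceMap w
  rw [← stanleyMap_eq_pieceMap hw, ← stanleyMap_eq_pieceMap hw', h]

def hypersimplex (m k : ℕ) : Set (Fin m → ℝ) :=
  {x ∈ cube m | (k : ℝ) - 1 ≤ ∑ i, x i ∧ ∑ i, x i ≤ k}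

variable {k : ℕ}

theorem piece_subset_hypersimplex (hm : 0 < m) (hk : 1 ≤ k) (hw : numDescents w⁻¹ = k - 1) :
    piece w ⊆ hypersimplex m k := fun x hx => by
  have h := (Int.floor_eq_natCast_sub_one_iff hk).mp (hw ▸ floor_sum_of_mem_piece hm hx)
  exact ⟨hx.1, h.1, h.2.le⟩

theorem volume_hypersimplex_diff (hm : 0 < m) (hk : 1 ≤ k) :
    volume (hypersimplex m k \ ⋃ w ∈ {w | numDescents w⁻¹ = k - 1}, piece w) = 0 := by
  refine measure_mono_null (t := (cube m \ ⋃ w, piece w) ∪ {x | ∑ i, x i = k}) ?_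
    (measure_union_null (ae_eq_set.mp iUnion_piece_ae_eq_cube).2 (volume_setOf_sum_eq hm k))
  rintro x ⟨⟨hx, hlo, hhi⟩, hxU⟩
  by_contra hbad
  simp only [Set.mem_union, Set.mem_sdiff, Set.mem_ofPred_eq, not_or, not_and, not_not] at hbad
  obtain ⟨w, hw⟩ := Set.mem_iUnion.mp (hbad.1 hx)
  refine hxU (Set.mem_biUnion (x := w) ?_ hw)
  have h := (Int.floor_eq_natCast_sub_one_iff hk).mpr ⟨hlo, hhi.lt_of_ne hbad.2⟩
  exact_mod_cast (floor_sum_of_mem_piece hm hw).symm.trans h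

theorem factorial_mul_volume_hypersimplex (hm : 0 < m) (hk : 1 ≤ k) :
    (m.factorial : ENNReal) * volume (hypersimplex m k)
      = Nat.card {w : Equiv.Perm (Fin m) // numDescents w⁻¹ = k - 1} := by
  set s := {w : Equiv.Perm (Fin m) | numDescents w⁻¹ = k - 1}
  have hsub : (⋃ w ∈ s, piece w) ⊆ hypersimplex m k :=
    Set.iUnion₂_subset fun w hw => piece_subset_hypersimplex hm hk hw
  rw [measure_congr (ae_eq_set.mpr ⟨volume_hypersimplex_diff hm hk,
      by rw [Set.sdiff_eq_empty.mpr hsub, measure_empty]⟩),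
    measure_biUnion s.to_countable (pairwise_disjoint_piece.set_pairwise s)
      fun w _ => measurableSet_piece w, ← ENNReal.tsum_mul_left]
  simp_rw [factorial_mul_volume_piece]
  rw [tsum_fintype, sum_const, card_univ, nsmul_eq_mul, mul_one, Nat.card_eq_fintype_card]
  rfl

end StanleyHypersimplex

open StanleyHypersimplex in
theorem stmt18_general (n k : ℕ) (hn : 2 ≤ n) (hk1 : 1 ≤ k) :
    let cube : Set (Fin (n - 1) → ℝ) := {x | ∀ i, 0 ≤ x i ∧ x i ≤ 1}
    let ψ : (Fin (n - 1) → ℝ) → (Fin (n - 1) → ℝ) :=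
      fun x i => Int.fract (∑ j ∈ Finset.univ.filter (fun j : Fin (n - 1) => j ≤ i), x j)
    let simplex : Equiv.Perm (Fin (n - 1)) → Set (Fin (n - 1) → ℝ) := fun w =>
      {y | (∀ i, 0 < y (w i) ∧ y (w i) < 1) ∧ ∀ i j : Fin (n - 1), i < j → y (w i) < y (w j)}
    let des : Equiv.Perm (Fin (n - 1)) → ℕ := fun w =>
      Nat.card {i : Fin (n - 1) // ∃ h : (i : ℕ) + 1 < n - 1, w⁻¹ ⟨(i : ℕ) + 1, h⟩ < w⁻¹ i}
    let T : Equiv.Perm (Fin (n - 1)) → Set (Fin (n - 1) → ℝ) := fun w => cube ∩ ψ ⁻¹' simplex w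
    let Δ : Set (Fin (n - 1) → ℝ) := {x ∈ cube | (k : ℝ) - 1 ≤ ∑ i, x i ∧ ∑ i, x i ≤ k}
    MeasurePreserving ψ (volume.restrict cube) (volume.restrict cube) ∧
    (∃ N : Set (Fin (n - 1) → ℝ), volume N = 0 ∧ Set.InjOn ψ (cube \ N)) ∧
    (∀ w, des w = k - 1 → T w ⊆ Δ) ∧
    (∀ w w', w ≠ w' → Disjoint (T w) (T w')) ∧
    (∀ w, des w = k - 1 → ((n - 1).factorial : ENNReal) * volume (T w) = 1) ∧
    volume (Δ \ ⋃ w ∈ {w | des w = k - 1}, T w) = 0 ∧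
    ((n - 1).factorial : ENNReal) * volume Δ
      = (Nat.card {w : Equiv.Perm (Fin (n - 1)) // des w = k - 1} : ENNReal) := by
  intro cube ψ simplex des T Δ
  have hm : 0 < n - 1 := by omega
  refine ⟨measurePreserving_stanleyMap, ⟨_, (ae_eq_set.mp iUnion_piece_ae_eq_cube).2, ?_⟩,
    fun w => piece_subset_hypersimplex hm hk1, fun _ _ h => pairwise_disjoint_piece h,
    fun w _ => factorial_mul_volume_piece w, volume_hypersimplex_diff hm hk1,
    factorial_mul_volume_hypersimplex hm hk1⟩
  exact injOn_stanleyMap.mono fun x hx => not_not.mp fun h => hx.2 ⟨hx.1, h⟩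

/-- Stanley's triangulation of the hypersimplex: the map
`ψ : [0,1]^{n-1} → [0,1]^{n-1}`, `ψ(x)_i = frac(x₁ + ⋯ + x_i)`, is volume preserving and
bijective outside a set of measure zero; for `w ∈ S_{n-1}` let
`∇_w = {y : 0 < y_{w(1)} < ⋯ < y_{w(n-1)} < 1}` and `T_w = cube ∩ ψ⁻¹(∇_w)`.  The pieces
`T_w` with `des(w⁻¹) = k - 1` are pairwise disjoint unit simplices (normalized volume `1`)
contained in the hypersimplex `Δ̃_{k,n} = {x ∈ [0,1]^{n-1} : k-1 ≤ ∑ x ≤ k}`, they cover it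
up to measure zero, and hence the normalized volume of `Δ̃_{k,n}` equals the Eulerian
number `A_{k,n-1}`, the number of `w ∈ S_{n-1}` with `k - 1` descents. -/
theorem stmt18 (n k : ℕ) (hn : 2 ≤ n) (hk1 : 1 ≤ k) (hkn : k ≤ n - 1) :
    let cube : Set (Fin (n - 1) → ℝ) := {x | ∀ i, 0 ≤ x i ∧ x i ≤ 1}
    let ψ : (Fin (n - 1) → ℝ) → (Fin (n - 1) → ℝ) :=
      fun x i => Int.fract (∑ j ∈ Finset.univ.filter (fun j : Fin (n - 1) => j ≤ i), x j)
    let simplex : Equiv.Perm (Fin (n - 1)) → Set (Fin (n - 1) → ℝ) := fun w =>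
      {y | (∀ i, 0 < y (w i) ∧ y (w i) < 1) ∧ ∀ i j : Fin (n - 1), i < j → y (w i) < y (w j)}
    let des : Equiv.Perm (Fin (n - 1)) → ℕ := fun w =>
      Nat.card {i : Fin (n - 1) // ∃ h : (i : ℕ) + 1 < n - 1, w⁻¹ ⟨(i : ℕ) + 1, h⟩ < w⁻¹ i}
    let T : Equiv.Perm (Fin (n - 1)) → Set (Fin (n - 1) → ℝ) := fun w => cube ∩ ψ ⁻¹' simplex w
    let Δ : Set (Fin (n - 1) → ℝ) := {x ∈ cube | (k : ℝ) - 1 ≤ ∑ i, x i ∧ ∑ i, x i ≤ k}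
    MeasurePreserving ψ (volume.restrict cube) (volume.restrict cube) ∧
    (∃ N : Set (Fin (n - 1) → ℝ), volume N = 0 ∧ Set.InjOn ψ (cube \ N)) ∧
    (∀ w, des w = k - 1 → T w ⊆ Δ) ∧
    (∀ w w', w ≠ w' → Disjoint (T w) (T w')) ∧
    (∀ w, des w = k - 1 → ((n - 1).factorial : ENNReal) * volume (T w) = 1) ∧
    volume (Δ \ ⋃ w ∈ {w | des w = k - 1}, T w) = 0 ∧
    ((n - 1).factorial : ENNReal) * volume Δ
      = (Nat.card {w : Equiv.Perm (Fin (n - 1)) // des w = k - 1} : ENNReal) :=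
  stmt18_general n k hn hk1
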